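/- The Diversity Owen value is the unique value on the class GD of TU-games with diversity constraints that satisfies Efficiency, Intra-coalitional balanced contributions with out players for preserving diversity, Equality through diversity, and Independence from Non-Diverse Coalitions. -/

import Mathlib

open Finset
open scoped Classical

/-- A TU-game with diversity constraints `(N, v, 𝓑, d)` (data only);
the components `B 0, …, B (m-1)` are indexed by `Fin m`. -/
structure DivGame where
  m : ℕ
  N : Finset ℕ
  v : Finset ℕ → ℝ
  B : Fin m → Finset ℕ
  d : Fin m → ℕ

/-- Membership in the class `GD` of TU-games with diversity constraints:
`v ∅ = 0`, `𝓑` is a partition of `N` into components, and `1 ≤ d k ≤ |B k|`. -/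
def IsGD (G : DivGame) : Prop :=
  G.v ∅ = 0 ∧
  (∀ k, G.B k ⊆ G.N) ∧
  (∀ i ∈ G.N, ∃! k, i ∈ G.B k) ∧
  (∀ k, 1 ≤ G.d k ∧ G.d k ≤ (G.B k).card)

/-- `S` is a diverse coalition: `|S ∩ B k| ≥ d k` for every component index `k`. -/
def DiverseCoal (G : DivGame) (S : Finset ℕ) : Prop :=
  ∀ k, G.d k ≤ (S ∩ G.B k).card

/-- The diversity-restricted game `v^d`. -/
noncomputable def restrictedGame (G : DivGame) : Finset ℕ → ℝ :=
  fun S => if DiverseCoal G S then G.v S else 0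

/-- The Owen value of player `i` in the game `v` with coalition structure `B` on `Fin m`. -/
noncomputable def Owen (m : ℕ) (v : Finset ℕ → ℝ) (B : Fin m → Finset ℕ) (i : ℕ) : ℝ :=
  ∑ k ∈ univ.filter (fun k => i ∈ B k),
    ∑ R ∈ ((univ : Finset (Fin m)).erase k).powerset,
      ∑ S ∈ ((B k).erase i).powerset,
        ((R.card.factorial * (m - R.card - 1).factorial : ℝ) / m.factorial) *
          ((S.card.factorial * ((B k).card - S.card - 1).factorial : ℝ) /
            (B k).card.factorial) *
          (v (R.biUnion B ∪ S ∪ {i}) - v (R.biUnion B ∪ S))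

/-- The Diversity Owen value: `DOw (N,v,𝓑,d) = Ow (N, v^d, 𝓑)`. -/
noncomputable def DOw (G : DivGame) : ℕ → ℝ :=
  Owen G.m (restrictedGame G) G.B

/-- The game on the same `(N, 𝓑, d)` with characteristic function `v`. -/
def gameWith (G : DivGame) (v : Finset ℕ → ℝ) : DivGame := { G with v := v }

/-- The induced subgame `(N \ {i}, v|_{N\{i}}, 𝓑|_{N\{i}}, d)` obtained by removing player `i`. -/
def dropPlayer (G : DivGame) (i : ℕ) : DivGame :=
  { G with N := G.N.erase i, B := fun k => (G.B k).erase i }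

/-- Player `i` is null in `v` (on player set `N`): `v (S ∪ {i}) = v S` for all `S ⊆ N \ {i}`. -/
def NullPlayerIn (v : Finset ℕ → ℝ) (N : Finset ℕ) (i : ℕ) : Prop :=
  ∀ S ⊆ N.erase i, v (insert i S) = v S

/-- Players `i` and `j` are symmetric in `v` (on player set `N`). -/
def SymmetricIn (v : Finset ℕ → ℝ) (N : Finset ℕ) (i j : ℕ) : Prop :=
  ∀ S ⊆ N \ {i, j}, v (insert i S) - v S = v (insert j S) - v S

/-- The game is diverse: `v S ≠ 0` implies `S` is a diverse coalition. -/
def IsDiverseGame (G : DivGame) : Prop :=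
  ∀ S ⊆ G.N, G.v S ≠ 0 → DiverseCoal G S

/-- Player `i` is an out player: `i ∈ B k` with `|B k| - d k ≥ 1`. -/
def OutPlayer (G : DivGame) (i : ℕ) : Prop :=
  ∃ k, i ∈ G.B k ∧ G.d k < (G.B k).card

/-- The game is `i`-out diverse: diverse and `i` is an out player. -/
def IOutDiverse (G : DivGame) (i : ℕ) : Prop :=
  IsDiverseGame G ∧ OutPlayer G i

/-- A value on `GD`. -/
abbrev Value := DivGame → ℕ → ℝ

/-- Efficiency (E). -/
def Efficiency (f : Value) : Prop :=
  ∀ G, IsGD G → ∑ i ∈ G.N, f G i = G.v G.N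

/-- Null Player Out for Preserving-Diversity Games (NPOPD). -/
def NPOPD (f : Value) : Prop :=
  ∀ G, IsGD G → ∀ i, IOutDiverse G i → NullPlayerIn G.v G.N i →
    ∀ j ∈ G.N.erase i, f G j = f (dropPlayer G i) j

/-- Fairness within Component (FwC). -/
def FwC (f : Value) : Prop :=
  ∀ G : DivGame, ∀ v w : Finset ℕ → ℝ,
    IsGD (gameWith G v) → IsGD (gameWith G w) →
    ∀ p : Fin G.m, ∀ i ∈ G.B p, ∀ j ∈ G.B p, SymmetricIn v G.N i j →
      f (gameWith G (v + w)) i - f (gameWith G w) i =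
        f (gameWith G (v + w)) j - f (gameWith G w) j

/-- Fairness through Diversity (FD). -/
def FD (f : Value) : Prop :=
  ∀ G : DivGame, ∀ v w : Finset ℕ → ℝ,
    IsGD (gameWith G v) → IsGD (gameWith G w) →
    ∀ p q : Fin G.m,
      (∑ i ∈ G.B p, f (gameWith G (v + w)) i) - (∑ i ∈ G.B p, f (gameWith G w) i) =
        (∑ i ∈ G.B q, f (gameWith G (v + w)) i) - (∑ i ∈ G.B q, f (gameWith G w) i)

/-- Independence from Non-Diverse Coalitions (INDC). -/
def INDC (f : Value) : Prop :=
  ∀ G : DivGame, ∀ v w : Finset ℕ → ℝ,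
    IsGD (gameWith G v) → IsGD (gameWith G w) →
    (∀ S ⊆ G.N, DiverseCoal G S → v S = w S) →
    ∀ i ∈ G.N, f (gameWith G v) i = f (gameWith G w) i

/-- Equality through diversity (ED). -/
def ED (f : Value) : Prop :=
  ∀ G, IsGD G → ∀ k q : Fin G.m, ∑ i ∈ G.B k, f G i = ∑ i ∈ G.B q, f G i

/-- Null Player for Diverse Games (ND). -/
def ND (f : Value) : Prop :=
  ∀ G, IsGD G → IsDiverseGame G → ∀ i ∈ G.N, NullPlayerIn G.v G.N i → f G i = 0

/-- Intra-coalitional balanced contributions with out players for preserving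
diversity (IBCOPPD). -/
def IBCOPPD (f : Value) : Prop :=
  ∀ G, IsGD G → IsDiverseGame G →
    ∀ p : Fin G.m, ∀ i ∈ G.B p, ∀ j ∈ G.B p, i ≠ j → G.d p < (G.B p).card →
      (f G i - f (dropPlayer G j) i = f G j - f (dropPlayer G i) j) ∧
      (NullPlayerIn (dropPlayer G j).v (dropPlayer G j).N i → f (dropPlayer G j) i = 0) ∧
      (NullPlayerIn (dropPlayer G i).v (dropPlayer G i).N j → f (dropPlayer G i) j = 0)

/-- Weak intra-coalitional balanced contributions with out players for preserving
diversity (IBCOPPD⁻). -/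
def IBCOPPDweak (f : Value) : Prop :=
  (∀ G, IsGD G → IsDiverseGame G →
    ∀ p : Fin G.m, ∀ i ∈ G.B p, ∀ j ∈ G.B p, i ≠ j → G.d p < (G.B p).card →
      f G i - f (dropPlayer G j) i = f G j - f (dropPlayer G i) j) ∧
  (∀ G, IsGD G → G.v = (fun _ => 0) → ∀ k ∈ G.N, f G k = 0)

/-- The extended game `(N ∪ {l}, (v)₊ₗ, 𝓑₊ₗ, d)` obtained by adding an
outside player `l` to the component `B k`. -/
def addPlayer (G : DivGame) (k : Fin G.m) (l : ℕ) : DivGame :=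
  { m := G.m
    N := insert l G.N
    v := fun S => G.v (S.erase l)
    B := fun k' => if k' = k then insert l (G.B k) else G.B k'
    d := G.d }


noncomputable def beta (s b : ℕ) : ℝ :=
  (s.factorial * (b - s - 1).factorial : ℝ) / b.factorial

lemma beta_succ_sub (s u : ℕ) :
    beta s (s + u + 2) - beta s (s + u + 1) = -beta (s + 1) (s + u + 2) := by
  unfold beta
  rw [show s + u + 2 - s - 1 = u + 1 by omega, show s + u + 1 - s - 1 = u by omega,
    show s + u + 2 - (s + 1) - 1 = u by omega,
    show s + u + 2 = (s + u + 1) + 1 by omega]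
  have h1 : ((s + u + 1 + 1).factorial : ℝ) = (s + u + 2) * (s + u + 1).factorial := by
    rw [Nat.factorial_succ]; push_cast; ring
  have h2 : ((u + 1).factorial : ℝ) = (u + 1) * u.factorial := by
    rw [Nat.factorial_succ]; push_cast; ring
  have h3 : ((s + 1).factorial : ℝ) = (s + 1) * s.factorial := by
    rw [Nat.factorial_succ]; push_cast; ring
  have hC : ((s + u + 1).factorial : ℝ) ≠ 0 := by positivity
  rw [h1, h2, h3]
  push_cast
  field_simp
  ring

lemma beta_eff_mid (s u : ℕ) :
    ((s + 1 : ℕ) : ℝ) * beta s (s + u + 2) = ((u + 1 : ℕ) : ℝ) * beta (s + 1) (s + u + 2) := by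
  unfold beta
  rw [show s + u + 2 - s - 1 = u + 1 by omega, show s + u + 2 - (s + 1) - 1 = u by omega]
  have h2 : ((u + 1).factorial : ℝ) = (u + 1) * u.factorial := by
    rw [Nat.factorial_succ]; push_cast; ring
  have h3 : ((s + 1).factorial : ℝ) = (s + 1) * s.factorial := by
    rw [Nat.factorial_succ]; push_cast; ring
  rw [h2, h3]
  push_cast
  ring

lemma beta_eff_top (b : ℕ) (hb : 1 ≤ b) : (b : ℝ) * beta (b - 1) b = 1 := by
  unfold beta
  rw [show b - (b - 1) - 1 = 0 by omega, Nat.factorial_zero]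
  have : (b.factorial : ℝ) = b * (b - 1).factorial := by
    rw [← Nat.mul_factorial_pred (by omega)]; push_cast; ring
  rw [this]
  have h1 : ((b - 1).factorial : ℝ) ≠ 0 := by positivity
  have h2 : (b : ℝ) ≠ 0 := by positivity
  field_simp
  norm_num

lemma beta_eff_bot (b : ℕ) (hb : 1 ≤ b) : (b : ℝ) * beta 0 b = 1 := by
  unfold beta
  rw [show b - 0 - 1 = b - 1 by omega, Nat.factorial_zero]
  have : (b.factorial : ℝ) = b * (b - 1).factorial := by
    rw [← Nat.mul_factorial_pred (by omega)]; push_cast; ring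
  rw [this]
  have h1 : ((b - 1).factorial : ℝ) ≠ 0 := by positivity
  have h2 : (b : ℝ) ≠ 0 := by positivity
  field_simp
  norm_num

/-- Abstract Shapley value on a finite player set `B`. -/
noncomputable def Sh (B : Finset ℕ) (w : Finset ℕ → ℝ) (i : ℕ) : ℝ :=
  ∑ S ∈ (B.erase i).powerset, beta S.card B.card * (w (insert i S) - w S)

lemma Sh_congr {B : Finset ℕ} {w w' : Finset ℕ → ℝ} {i : ℕ}
    (h : ∀ Y ⊆ insert i B, w Y = w' Y) : Sh B w i = Sh B w' i := by
  unfold Sh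
  refine Finset.sum_congr rfl fun S hS => ?_
  have hSB : S ⊆ B := (mem_powerset.mp hS).trans (erase_subset _ _)
  rw [h (insert i S) (insert_subset_insert _ hSB),
    h S (hSB.trans (subset_insert _ _))]

lemma Sh_null {B : Finset ℕ} {w : Finset ℕ → ℝ} {i : ℕ}
    (h : ∀ S ⊆ B.erase i, w (insert i S) = w S) : Sh B w i = 0 := by
  unfold Sh
  refine Finset.sum_eq_zero fun S hS => ?_
  rw [h S (mem_powerset.mp hS)]
  ring

lemma powerset_erase (B : Finset ℕ) (i : ℕ) :
    (B.erase i).powerset = B.powerset.filter (fun S => i ∉ S) := by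
  ext S; simp [Finset.subset_erase, and_comm]


lemma Sh_eff (B : Finset ℕ) (w : Finset ℕ → ℝ) :
    ∑ i ∈ B, Sh B w i = w B - w ∅ := by
  classical
  have step1 : ∀ i, Sh B w i =
      ∑ S ∈ B.powerset, (if i ∉ S then beta S.card B.card * (w (insert i S) - w S) else 0) := by
    intro i
    unfold Sh
    rw [powerset_erase, sum_filter]
  have step2 : ∑ i ∈ B, Sh B w i
      = ∑ S ∈ B.powerset, ∑ i ∈ B \ S, beta S.card B.card * (w (insert i S) - w S) := by
    rw [show ∑ i ∈ B, Sh B w i = ∑ i ∈ B, ∑ S ∈ B.powerset,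
        (if i ∉ S then beta S.card B.card * (w (insert i S) - w S) else 0) from
      Finset.sum_congr rfl fun i _ => step1 i, Finset.sum_comm]
    refine Finset.sum_congr rfl fun S _ => ?_
    rw [← Finset.sum_filter]
    congr 1
    ext x; simp [mem_sdiff]
  have hA : ∑ S ∈ B.powerset, ∑ i ∈ B \ S, beta S.card B.card * w (insert i S)
      = ∑ T ∈ B.powerset, (T.card : ℝ) * beta (T.card - 1) B.card * w T := by
    have hR : ∀ T ∈ B.powerset, (T.card : ℝ) * beta (T.card - 1) B.card * w T
        = ∑ i ∈ T, beta (T.card - 1) B.card * w T := fun T _ => by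
      rw [Finset.sum_const, nsmul_eq_mul]; ring
    rw [Finset.sum_congr rfl hR]
    rw [Finset.sum_sigma', Finset.sum_sigma']
    refine Finset.sum_bij' (fun (x : Σ _ : Finset ℕ, ℕ) _ => (⟨insert x.2 x.1, x.2⟩ : Σ _ : Finset ℕ, ℕ))
      (fun (y : Σ _ : Finset ℕ, ℕ) _ => (⟨y.1.erase y.2, y.2⟩ : Σ _ : Finset ℕ, ℕ)) ?_ ?_ ?_ ?_ ?_
    · rintro ⟨S, i⟩ hSi
      simp only [mem_sigma, mem_powerset, mem_sdiff] at hSi ⊢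
      exact ⟨insert_subset hSi.2.1 hSi.1, mem_insert_self _ _⟩
    · rintro ⟨T, i⟩ hTi
      simp only [mem_sigma, mem_powerset, mem_sdiff] at hTi ⊢
      exact ⟨(erase_subset _ _).trans hTi.1, hTi.1 hTi.2, notMem_erase _ _⟩
    · rintro ⟨S, i⟩ hSi
      simp only [mem_sigma, mem_powerset, mem_sdiff] at hSi
      simp [erase_insert hSi.2.2]
    · rintro ⟨T, i⟩ hTi
      simp only [mem_sigma, mem_powerset, mem_sdiff] at hTi
      simp [insert_erase hTi.2]
    · rintro ⟨S, i⟩ hSi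
      simp only [mem_sigma, mem_powerset, mem_sdiff] at hSi
      rw [card_insert_of_notMem hSi.2.2]
      simp
  calc ∑ i ∈ B, Sh B w i
      = ∑ S ∈ B.powerset, ∑ i ∈ B \ S, beta S.card B.card * (w (insert i S) - w S) := step2
    _ = (∑ S ∈ B.powerset, ∑ i ∈ B \ S, beta S.card B.card * w (insert i S))
        - ∑ S ∈ B.powerset, ((B.card - S.card : ℕ) : ℝ) * beta S.card B.card * w S := by
        rw [← Finset.sum_sub_distrib]
        refine Finset.sum_congr rfl fun S hS => ?_
        have hcard : (B \ S).card = B.card - S.card :=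
          card_sdiff_of_subset (mem_powerset.mp hS)
        have : ∑ i ∈ B \ S, beta S.card B.card * (w (insert i S) - w S)
            = ∑ i ∈ B \ S, (beta S.card B.card * w (insert i S) - beta S.card B.card * w S) :=
          Finset.sum_congr rfl fun i _ => by ring
        rw [this, Finset.sum_sub_distrib]
        congr 1
        rw [Finset.sum_const, hcard, nsmul_eq_mul]
        ring
    _ = (∑ T ∈ B.powerset, (T.card : ℝ) * beta (T.card - 1) B.card * w T)
        - ∑ S ∈ B.powerset, ((B.card - S.card : ℕ) : ℝ) * beta S.card B.card * w S := by
        rw [hA]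
    _ = ∑ T ∈ B.powerset, (((T.card : ℝ) * beta (T.card - 1) B.card
          - ((B.card - T.card : ℕ) : ℝ) * beta T.card B.card) * w T) := by
        rw [← Finset.sum_sub_distrib]
        exact Finset.sum_congr rfl fun T _ => by ring
    _ = ∑ T ∈ B.powerset, ((if T = B then w B else 0) - (if T = ∅ then w ∅ else 0)) := by
        refine Finset.sum_congr rfl fun T hT => ?_
        have hTB : T ⊆ B := mem_powerset.mp hT
        by_cases h1 : T = B
        · subst h1
          by_cases h0 : T = ∅
          · subst h0; simp
          · have hb : 1 ≤ T.card := Nat.one_le_iff_ne_zero.mpr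
              (fun h => h0 (card_eq_zero.mp h))
            rw [if_pos rfl, if_neg h0, Nat.sub_self]
            rw [show ((0:ℕ):ℝ) = 0 by norm_num]
            rw [beta_eff_top T.card hb]
            ring
        · by_cases h0 : T = ∅
          · subst h0
            have hBne : B.Nonempty := by
              rcases B.eq_empty_or_nonempty with h | h
              · exact absurd h.symm (by simpa using h1)
              · exact h
            have hb : 1 ≤ B.card := card_pos.mpr hBne
            rw [if_neg h1, if_pos rfl]
            simp only [card_empty, Nat.sub_zero]
            rw [beta_eff_bot B.card hb]
            ring
          · have ht1 : 1 ≤ T.card := card_pos.mpr (nonempty_iff_ne_empty.mpr h0)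
            have htb : T.card < B.card := card_lt_card (ssubset_of_subset_of_ne hTB h1)
            obtain ⟨s, hs⟩ : ∃ s, T.card = s + 1 := ⟨T.card - 1, by omega⟩
            obtain ⟨u, hu⟩ : ∃ u, B.card = s + u + 2 := ⟨B.card - s - 2, by omega⟩
            rw [if_neg h1, if_neg h0, hs, hu]
            rw [show s + 1 - 1 = s by omega, show s + u + 2 - (s + 1) = u + 1 by omega]
            have := beta_eff_mid s u
            push_cast at this ⊢
            rw [this]
            ring
    _ = w B - w ∅ := by
        rw [Finset.sum_sub_distrib, Finset.sum_ite_eq' _ B, Finset.sum_ite_eq' _ ∅]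
        simp

lemma Sh_drop {B : Finset ℕ} (w : Finset ℕ → ℝ) {i j : ℕ}
    (hi : i ∈ B) (hj : j ∈ B) (hij : i ≠ j) :
    Sh B w i - Sh (B.erase j) w i =
      ∑ S ∈ ((B.erase i).erase j).powerset, beta (S.card + 1) B.card *
        (w (insert i (insert j S)) - w (insert j S) - (w (insert i S) - w S)) := by
  classical
  set D := (B.erase i).erase j with hD
  have hjD : j ∉ D := notMem_erase _ _
  have hjBi : j ∈ B.erase i := mem_erase.mpr ⟨hij.symm, hj⟩
  have hBi : B.erase i = insert j D := (insert_erase hjBi).symm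
  have hcB : 2 ≤ B.card := by
    have := Finset.one_lt_card_iff.mpr ⟨i, j, hi, hj, hij⟩
    omega
  have hDcard : D.card = B.card - 2 := by
    rw [hD, card_erase_of_mem hjBi, card_erase_of_mem hi]; omega
  have hBj : (B.erase j).erase i = D := Finset.erase_right_comm
  have hBjcard : (B.erase j).card = B.card - 1 := card_erase_of_mem hj
  have e1 : Sh B w i = ∑ S ∈ D.powerset, beta S.card B.card * (w (insert i S) - w S)
      + ∑ S ∈ D.powerset, beta (S.card + 1) B.card *
          (w (insert i (insert j S)) - w (insert j S)) := by
    unfold Sh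
    rw [hBi, Finset.sum_powerset_insert hjD]
    congr 1
    refine Finset.sum_congr rfl fun S hS => ?_
    have hjS : j ∉ S := fun h => hjD (mem_powerset.mp hS h)
    rw [card_insert_of_notMem hjS]
  have e2 : Sh (B.erase j) w i
      = ∑ S ∈ D.powerset, beta S.card (B.card - 1) * (w (insert i S) - w S) := by
    unfold Sh
    rw [hBj, hBjcard]
  rw [e1, e2, add_sub_right_comm, ← Finset.sum_sub_distrib, ← Finset.sum_add_distrib]
  refine Finset.sum_congr rfl fun S hS => ?_
  have hSc : S.card ≤ B.card - 2 := by
    rw [← hDcard]; exact card_le_card (mem_powerset.mp hS)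
  obtain ⟨u, hu⟩ : ∃ u, B.card = S.card + u + 2 := ⟨B.card - S.card - 2, by omega⟩
  have hkey : beta S.card B.card - beta S.card (B.card - 1) = -beta (S.card + 1) B.card := by
    rw [hu, show S.card + u + 2 - 1 = S.card + u + 1 by omega]
    exact beta_succ_sub S.card u
  have : beta S.card B.card * (w (insert i S) - w S)
      - beta S.card (B.card - 1) * (w (insert i S) - w S)
      = (beta S.card B.card - beta S.card (B.card - 1)) * (w (insert i S) - w S) := by ring
  rw [this, hkey]
  ring

lemma Sh_BC {B : Finset ℕ} (w : Finset ℕ → ℝ) {i j : ℕ}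
    (hi : i ∈ B) (hj : j ∈ B) (hij : i ≠ j) :
    Sh B w i - Sh (B.erase j) w i = Sh B w j - Sh (B.erase i) w j := by
  rw [Sh_drop w hi hj hij, Sh_drop w hj hi hij.symm]
  rw [show (B.erase j).erase i = (B.erase i).erase j from Finset.erase_right_comm]
  refine Finset.sum_congr rfl fun S _ => ?_
  rw [Finset.insert_comm]
  ring

section GameAux

variable {G : DivGame}

lemma comp_unique (hG : IsGD G) {x : ℕ} {k q : Fin G.m} (hk : x ∈ G.B k) (hq : x ∈ G.B q) :
    k = q := by
  have hxN : x ∈ G.N := hG.2.1 k hk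
  obtain ⟨r, _, hr⟩ := hG.2.2.1 x hxN
  rw [hr k hk, hr q hq]

lemma GD_disj (hG : IsGD G) {k q : Fin G.m} (h : k ≠ q) : Disjoint (G.B k) (G.B q) := by
  rw [Finset.disjoint_left]
  intro x hk hq
  exact h (comp_unique hG hk hq)

lemma GD_N_eq (hG : IsGD G) : G.N = Finset.univ.biUnion G.B := by
  ext x
  simp only [mem_biUnion, mem_univ, true_and]
  constructor
  · intro hx; obtain ⟨k, hk, _⟩ := hG.2.2.1 x hx; exact ⟨k, hk⟩
  · rintro ⟨k, hk⟩; exact hG.2.1 k hk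

/-- The union of all components other than `p`. -/
noncomputable def Qset (G : DivGame) (p : Fin G.m) : Finset ℕ :=
  (Finset.univ.erase p).biUnion G.B

lemma not_mem_Qset (hG : IsGD G) {p : Fin G.m} {x : ℕ} (hx : x ∈ G.B p) : x ∉ Qset G p := by
  intro h
  obtain ⟨r, hr, hxr⟩ := Finset.mem_biUnion.mp h
  exact (Finset.mem_erase.mp hr).1 (comp_unique hG hxr hx)

lemma Qset_union (hG : IsGD G) (p : Fin G.m) : Qset G p ∪ G.B p = G.N := by
  ext x
  constructor
  · intro hx
    rcases Finset.mem_union.mp hx with hx | hx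
    · obtain ⟨r, _, hxr⟩ := Finset.mem_biUnion.mp hx
      exact hG.2.1 r hxr
    · exact hG.2.1 p hx
  · intro hx
    obtain ⟨k, hk, _⟩ := hG.2.2.1 x hx
    by_cases hkp : k = p
    · exact Finset.mem_union_right _ (hkp ▸ hk)
    · exact Finset.mem_union_left _ (Finset.mem_biUnion.mpr ⟨k, Finset.mem_erase.mpr ⟨hkp, Finset.mem_univ k⟩, hk⟩)

lemma rg_N (hG : IsGD G) : restrictedGame G G.N = G.v G.N := by
  unfold restrictedGame
  rw [if_pos]
  intro k
  rw [Finset.inter_eq_right.mpr (hG.2.1 k)]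
  exact (hG.2.2.2 k).2

lemma rg_Q (hG : IsGD G) (p : Fin G.m) : restrictedGame G (Qset G p) = 0 := by
  unfold restrictedGame
  rw [if_neg]
  intro hdiv
  have h1 := hdiv p
  have hempty : Qset G p ∩ G.B p = ∅ :=
    Finset.eq_empty_of_forall_notMem fun x hx =>
      not_mem_Qset hG (Finset.mem_inter.mp hx).2 (Finset.mem_inter.mp hx).1
  rw [hempty] at h1
  simp only [Finset.card_empty] at h1
  have := (hG.2.2.2 p).1
  omega

lemma owen_collapse (m : ℕ) (w : Finset ℕ → ℝ) (B : Fin m → Finset ℕ) (d : Fin m → ℕ)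
    (hdisj : ∀ k q : Fin m, k ≠ q → Disjoint (B k) (B q))
    (hd : ∀ k, 1 ≤ d k)
    (hw : ∀ S : Finset ℕ, (∃ k, (S ∩ B k).card < d k) → w S = 0)
    (p : Fin m) (i : ℕ) (hip : i ∈ B p) (huniq : ∀ k, i ∈ B k → k = p) :
    Owen m w B i = (1 / m) * Sh (B p) (fun S => w ((Finset.univ.erase p).biUnion B ∪ S)) i := by
  have hm : 0 < m := p.pos
  have hfilter : Finset.univ.filter (fun k => i ∈ B k) = {p} := by
    ext k
    simp only [Finset.mem_filter, Finset.mem_univ, true_and, Finset.mem_singleton]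
    exact ⟨fun h => huniq k h, fun h => h ▸ hip⟩
  unfold Owen
  rw [hfilter, Finset.sum_singleton]
  have hzero : ∀ R ∈ (Finset.univ.erase p).powerset, R ≠ Finset.univ.erase p →
      (∑ S ∈ ((B p).erase i).powerset,
        ((R.card.factorial * (m - R.card - 1).factorial : ℝ) / m.factorial) *
          ((S.card.factorial * ((B p).card - S.card - 1).factorial : ℝ) /
            (B p).card.factorial) *
          (w (R.biUnion B ∪ S ∪ {i}) - w (R.biUnion B ∪ S))) = 0 := by
    intro R hR hne
    obtain ⟨q, hq_mem, hq_not⟩ :=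
      Finset.exists_of_ssubset (ssubset_of_subset_of_ne (Finset.mem_powerset.mp hR) hne)
    have hqp : q ≠ p := (Finset.mem_erase.mp hq_mem).1
    refine Finset.sum_eq_zero fun S hS => ?_
    have hSsub : S ⊆ (B p).erase i := Finset.mem_powerset.mp hS
    have hkey : ∀ X : Finset ℕ, (∀ x ∈ X, x ∈ R.biUnion B ∨ x ∈ B p) → w X = 0 := by
      intro X hX
      apply hw
      refine ⟨q, ?_⟩
      have hempty : X ∩ B q = ∅ := by
        refine Finset.eq_empty_of_forall_notMem fun x hx => ?_
        have hxq := (Finset.mem_inter.mp hx).2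
        rcases hX x (Finset.mem_inter.mp hx).1 with h | h
        · obtain ⟨r, hrR, hxr⟩ := Finset.mem_biUnion.mp h
          have hrq : r ≠ q := fun he => hq_not (he ▸ hrR)
          exact (Finset.disjoint_left.mp (hdisj r q hrq) hxr) hxq
        · exact (Finset.disjoint_left.mp (hdisj q p hqp) hxq) h
      rw [hempty]
      exact lt_of_lt_of_le (by simp) (hd q)
    have h1 : w (R.biUnion B ∪ S ∪ {i}) = 0 := by
      apply hkey
      intro x hx
      rcases Finset.mem_union.mp hx with hx | hx
      · rcases Finset.mem_union.mp hx with hx | hx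
        · exact Or.inl hx
        · exact Or.inr (Finset.mem_of_mem_erase (hSsub hx))
      · exact Or.inr ((Finset.mem_singleton.mp hx) ▸ hip)
    have h2 : w (R.biUnion B ∪ S) = 0 := by
      apply hkey
      intro x hx
      rcases Finset.mem_union.mp hx with hx | hx
      · exact Or.inl hx
      · exact Or.inr (Finset.mem_of_mem_erase (hSsub hx))
    rw [h1, h2]
    ring
  rw [Finset.sum_eq_single_of_mem (Finset.univ.erase p)
    (Finset.mem_powerset.mpr (Finset.Subset.refl _)) hzero]
  have hcard : (Finset.univ.erase p).card = m - 1 := by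
    rw [Finset.card_erase_of_mem (Finset.mem_univ p), Finset.card_univ, Fintype.card_fin]
  have hgamma : (((Finset.univ.erase p).card.factorial *
      (m - (Finset.univ.erase p).card - 1).factorial : ℝ) / m.factorial) = 1 / m := by
    rw [hcard, show m - (m - 1) - 1 = 0 by omega, Nat.factorial_zero]
    have hfac : (m.factorial : ℝ) = m * (m - 1).factorial := by
      rw [← Nat.mul_factorial_pred (by omega)]; push_cast; ring
    rw [hfac]
    have h1 : ((m - 1).factorial : ℝ) ≠ 0 := by positivity
    have h2 : (m : ℝ) ≠ 0 := by positivity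
    field_simp
    ring
  unfold Sh
  rw [Finset.mul_sum]
  refine Finset.sum_congr rfl fun S hS => ?_
  rw [hgamma]
  have harg : (Finset.univ.erase p).biUnion B ∪ S ∪ {i}
      = (Finset.univ.erase p).biUnion B ∪ insert i S := by
    rw [Finset.union_insert]
    rw [Finset.union_comm _ ({i} : Finset ℕ)]
    rfl
  rw [harg]
  simp only [beta]
  ring

lemma DOw_eq_Sh (hG : IsGD G) {p : Fin G.m} {i : ℕ} (hip : i ∈ G.B p) :
    DOw G i = (1 / G.m) * Sh (G.B p) (fun S => restrictedGame G (Qset G p ∪ S)) i := by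
  unfold DOw Qset
  exact owen_collapse G.m (restrictedGame G) G.B G.d
    (fun k q hkq => GD_disj hG hkq) (fun k => (hG.2.2.2 k).1)
    (fun S h => by
      obtain ⟨k, hk⟩ := h
      unfold restrictedGame
      exact if_neg fun hdiv => absurd (hdiv k) (not_le.mpr hk))
    p i hip (fun k hk => comp_unique hG hk hip)

end GameAux

section GameAux2

variable {G : DivGame}

lemma diverse_drop_iff {j : ℕ} {Y : Finset ℕ} (hjY : j ∉ Y) :
    DiverseCoal (dropPlayer G j) Y ↔ DiverseCoal G Y := by
  have h : ∀ k : Fin G.m, Y ∩ (G.B k).erase j = Y ∩ G.B k := by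
    intro k
    ext x
    simp only [Finset.mem_inter, Finset.mem_erase]
    constructor
    · rintro ⟨hY, _, hB⟩; exact ⟨hY, hB⟩
    · rintro ⟨hY, hB⟩; exact ⟨hY, fun he => hjY (he ▸ hY), hB⟩
  unfold DiverseCoal
  exact forall_congr' fun k => by
    rw [show (dropPlayer G j).B k = (G.B k).erase j from rfl,
        show (dropPlayer G j).d k = G.d k from rfl, h k]

lemma rg_drop_eq {j : ℕ} {Y : Finset ℕ} (hjY : j ∉ Y) :
    restrictedGame (dropPlayer G j) Y = restrictedGame G Y := by
  unfold restrictedGame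
  by_cases h : DiverseCoal G Y
  · rw [if_pos ((diverse_drop_iff hjY).mpr h), if_pos h]
    rfl
  · rw [if_neg (fun h' => h ((diverse_drop_iff hjY).mp h')), if_neg h]

lemma Qset_drop (hG : IsGD G) {p : Fin G.m} {j : ℕ} (hjp : j ∈ G.B p) :
    (Finset.univ.erase p).biUnion (fun k => (G.B k).erase j) = Qset G p := by
  refine Finset.biUnion_congr rfl fun k hk => ?_
  exact Finset.erase_eq_of_notMem
    (fun hj => (Finset.mem_erase.mp hk).1 (comp_unique hG hj hjp))

lemma DOw_drop_eq_Sh (hG : IsGD G) {p : Fin G.m} {a b : ℕ}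
    (ha : a ∈ G.B p) (hb : b ∈ G.B p) (hab : a ≠ b) :
    DOw (dropPlayer G b) a
      = (1 / G.m) * Sh ((G.B p).erase b)
          (fun S => restrictedGame G (Qset G p ∪ S)) a := by
  have collapse := owen_collapse G.m (restrictedGame (dropPlayer G b))
      (fun k => (G.B k).erase b) G.d
      (fun k q hkq => Finset.disjoint_of_subset_left (Finset.erase_subset _ _)
        ((GD_disj hG hkq).mono_right (Finset.erase_subset _ _)))
      (fun k => (hG.2.2.2 k).1)
      (fun S h => by
        obtain ⟨k, hk⟩ := h
        unfold restrictedGame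
        exact if_neg fun hdiv => absurd (hdiv k) (not_le.mpr hk))
      p a (Finset.mem_erase.mpr ⟨hab, ha⟩)
      (fun k hk => comp_unique hG (Finset.mem_of_mem_erase hk) ha)
  rw [show DOw (dropPlayer G b) a
      = Owen G.m (restrictedGame (dropPlayer G b)) (fun k => (G.B k).erase b) a from rfl,
    collapse]
  congr 1
  rw [Qset_drop hG hb]
  refine Sh_congr fun Y hY => ?_
  have hbY : b ∉ Qset G p ∪ Y := by
    intro h
    rcases Finset.mem_union.mp h with h | h
    · exact not_mem_Qset hG hb h
    · rcases Finset.mem_insert.mp (hY h) with h1 | h1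
      · exact hab h1.symm
      · exact (Finset.mem_erase.mp h1).1 rfl
  exact rg_drop_eq hbY

lemma DOw_BC (hG : IsGD G) {p : Fin G.m} {i j : ℕ}
    (hi : i ∈ G.B p) (hj : j ∈ G.B p) (hij : i ≠ j) :
    DOw G i - DOw (dropPlayer G j) i = DOw G j - DOw (dropPlayer G i) j := by
  rw [DOw_eq_Sh hG hi, DOw_eq_Sh hG hj, DOw_drop_eq_Sh hG hi hj hij,
    DOw_drop_eq_Sh hG hj hi hij.symm]
  have hBC := Sh_BC (fun S => restrictedGame G (Qset G p ∪ S)) hi hj hij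
  have hm : (0:ℝ) < G.m := by exact_mod_cast p.pos
  linear_combination (1 / (G.m : ℝ)) * hBC

lemma DOw_drop_null (hG : IsGD G) (hDiv : IsDiverseGame G) {i j : ℕ}
    (hiN : i ∈ G.N) (hjN : j ∈ G.N) (hij : i ≠ j)
    (hnull : NullPlayerIn (dropPlayer G j).v (dropPlayer G j).N i) :
    DOw (dropPlayer G j) i = 0 := by
  have key : ∀ Y ⊆ G.N.erase j, restrictedGame (dropPlayer G j) Y = G.v Y := by
    intro Y hY
    have hjY : j ∉ Y := fun h => (Finset.mem_erase.mp (hY h)).1 rfl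
    rw [rg_drop_eq hjY]
    unfold restrictedGame
    by_cases h : DiverseCoal G Y
    · rw [if_pos h]
    · rw [if_neg h]
      by_contra hv
      exact h (hDiv Y (hY.trans (Finset.erase_subset _ _)) (fun h0 => hv h0.symm))
  show Owen G.m (restrictedGame (dropPlayer G j)) (dropPlayer G j).B i = 0
  unfold Owen
  refine Finset.sum_eq_zero fun k hk => Finset.sum_eq_zero fun R hR =>
    Finset.sum_eq_zero fun S hS => ?_
  have hik : i ∈ (G.B k).erase j := by simp only [Finset.mem_filter] at hk; exact hk.2
  have hi_k : i ∈ G.B k := Finset.mem_of_mem_erase hik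
  have hRsub : R ⊆ Finset.univ.erase k := Finset.mem_powerset.mp hR
  have hSsub : S ⊆ ((G.B k).erase j).erase i := Finset.mem_powerset.mp hS
  have hXsub : R.biUnion (dropPlayer G j).B ∪ S ⊆ (G.N.erase j).erase i := by
    intro x hx
    rcases Finset.mem_union.mp hx with hx | hx
    · obtain ⟨r, hrR, hxr⟩ := Finset.mem_biUnion.mp hx
      have hxr' : x ∈ (G.B r).erase j := hxr
      have hxj : x ≠ j := (Finset.mem_erase.mp hxr').1
      have hxB : x ∈ G.B r := Finset.mem_of_mem_erase hxr'
      have hxi : x ≠ i := by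
        intro he
        subst he
        exact (Finset.mem_erase.mp (hRsub hrR)).1 (comp_unique hG hxB hi_k)
      exact Finset.mem_erase.mpr ⟨hxi, Finset.mem_erase.mpr ⟨hxj, hG.2.1 r hxB⟩⟩
    · have hx2 : x ∈ (G.B k).erase j := Finset.mem_of_mem_erase (hSsub hx)
      exact Finset.mem_erase.mpr ⟨(Finset.mem_erase.mp (hSsub hx)).1,
        Finset.mem_erase.mpr ⟨(Finset.mem_erase.mp hx2).1,
          hG.2.1 k (Finset.mem_of_mem_erase hx2)⟩⟩
  have hXsub' : R.biUnion (dropPlayer G j).B ∪ S ⊆ G.N.erase j :=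
    hXsub.trans (Finset.erase_subset _ _)
  have hiXins : insert i (R.biUnion (dropPlayer G j).B ∪ S) ⊆ G.N.erase j :=
    Finset.insert_subset (Finset.mem_erase.mpr ⟨hij, hiN⟩) hXsub'
  have harg : R.biUnion (dropPlayer G j).B ∪ S ∪ {i}
      = insert i (R.biUnion (dropPlayer G j).B ∪ S) := by
    rw [Finset.union_comm _ ({i} : Finset ℕ)]
    rfl
  have hnn : G.v (insert i (R.biUnion (dropPlayer G j).B ∪ S))
      = G.v (R.biUnion (dropPlayer G j).B ∪ S) := hnull _ hXsub
  rw [harg, key _ hiXins, key _ hXsub', hnn]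
  ring

end GameAux2

section GameAux3

variable {G : DivGame}

lemma DOw_compSum (hG : IsGD G) (p : Fin G.m) :
    ∑ i ∈ G.B p, DOw G i = G.v G.N / G.m := by
  have hm : 0 < G.m := p.pos
  have hstep : ∀ i ∈ G.B p, DOw G i
      = (1 / G.m) * Sh (G.B p) (fun S => restrictedGame G (Qset G p ∪ S)) i :=
    fun i hi => DOw_eq_Sh hG hi
  rw [Finset.sum_congr rfl hstep, ← Finset.mul_sum, Sh_eff]
  simp only [Finset.union_empty]
  rw [Qset_union hG p, rg_N hG, rg_Q hG p]
  have h2 : (G.m : ℝ) ≠ 0 := by positivity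
  field_simp
  ring

lemma DOw_E : Efficiency DOw := by
  intro G hG
  rcases Nat.eq_zero_or_pos G.m with hm | hm
  · have hN : G.N = ∅ :=
      Finset.eq_empty_of_forall_notMem fun x hx => by
        obtain ⟨k, _, _⟩ := hG.2.2.1 x hx
        exact absurd k.pos (by omega)
    rw [hN, Finset.sum_empty, hG.1]
  · have hpd : (↑(Finset.univ : Finset (Fin G.m)) : Set (Fin G.m)).PairwiseDisjoint G.B :=
      fun k _ q _ hkq => GD_disj hG hkq
    rw [GD_N_eq hG, Finset.sum_biUnion hpd]
    have hall : ∀ k ∈ (Finset.univ : Finset (Fin G.m)),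
        ∑ i ∈ G.B k, DOw G i = G.v G.N / G.m := fun k _ => DOw_compSum hG k
    rw [Finset.sum_congr rfl hall, Finset.sum_const, Finset.card_univ,
      Fintype.card_fin, nsmul_eq_mul]
    have h2 : (G.m : ℝ) ≠ 0 := by positivity
    rw [← GD_N_eq hG]
    field_simp

lemma DOw_ED : ED DOw := fun G hG k q => by
  rw [DOw_compSum hG k, DOw_compSum hG q]

lemma DOw_INDC : INDC DOw := by
  intro G v w hGv hGw hvw i hi
  show Owen G.m (restrictedGame (gameWith G v)) G.B i
      = Owen G.m (restrictedGame (gameWith G w)) G.B i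
  have key : ∀ X ⊆ G.N, restrictedGame (gameWith G v) X = restrictedGame (gameWith G w) X := by
    intro X hX
    unfold restrictedGame
    by_cases h : DiverseCoal G X
    · rw [if_pos (show DiverseCoal (gameWith G v) X from h),
        if_pos (show DiverseCoal (gameWith G w) X from h)]
      exact hvw X hX h
    · rw [if_neg (show ¬DiverseCoal (gameWith G v) X from h),
        if_neg (show ¬DiverseCoal (gameWith G w) X from h)]
  unfold Owen
  refine Finset.sum_congr rfl fun k hk => Finset.sum_congr rfl fun R hR =>
    Finset.sum_congr rfl fun S hS => ?_
  have hik : i ∈ G.B k := (Finset.mem_filter.mp hk).2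
  have hXsub : R.biUnion G.B ∪ S ⊆ G.N := by
    intro x hx
    rcases Finset.mem_union.mp hx with hx | hx
    · obtain ⟨r, _, hxr⟩ := Finset.mem_biUnion.mp hx
      exact hGv.2.1 r hxr
    · exact hGv.2.1 k (Finset.mem_of_mem_erase ((Finset.mem_powerset.mp hS) hx))
  have h1 : R.biUnion G.B ∪ S ∪ {i} ⊆ G.N :=
    Finset.union_subset hXsub (Finset.singleton_subset_iff.mpr (hGv.2.1 k hik))
  rw [key _ h1, key _ hXsub]

lemma DOw_IB : IBCOPPD DOw := by
  intro G hG hDiv p i hi j hj hij hd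
  have hiN := hG.2.1 p hi
  have hjN := hG.2.1 p hj
  exact ⟨DOw_BC hG hi hj hij,
    fun hn => DOw_drop_null hG hDiv hiN hjN hij hn,
    fun hn => DOw_drop_null hG hDiv hjN hiN hij.symm hn⟩

end GameAux3

section Uniqueness

variable {G : DivGame}

lemma f_compSum {f : Value} (hE : Efficiency f) (hED : ED f) (hG : IsGD G) (p : Fin G.m) :
    ∑ i ∈ G.B p, f G i = G.v G.N / G.m := by
  have hm : 0 < G.m := p.pos
  have hpd : (↑(Finset.univ : Finset (Fin G.m)) : Set (Fin G.m)).PairwiseDisjoint G.B :=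
    fun k _ q _ hkq => GD_disj hG hkq
  have htot : ∑ k : Fin G.m, ∑ i ∈ G.B k, f G i = G.v G.N := by
    rw [← Finset.sum_biUnion hpd, ← GD_N_eq hG]
    exact hE G hG
  have hall : ∀ k ∈ (Finset.univ : Finset (Fin G.m)),
      ∑ i ∈ G.B k, f G i = ∑ i ∈ G.B p, f G i := fun k _ => hED G hG k p
  rw [Finset.sum_congr rfl hall, Finset.sum_const, Finset.card_univ,
    Fintype.card_fin, nsmul_eq_mul] at htot
  have hmne : (G.m : ℝ) ≠ 0 := Nat.cast_ne_zero.mpr hm.ne'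
  rw [eq_div_iff hmne]
  linarith [htot]

lemma drop_IsGD (hG : IsGD G) {p : Fin G.m} {j : ℕ} (hj : j ∈ G.B p)
    (hd : G.d p < (G.B p).card) : IsGD (dropPlayer G j) := by
  refine ⟨hG.1, ?_, ?_, ?_⟩
  · intro k
    exact Finset.erase_subset_erase j (hG.2.1 k)
  · intro x hx
    have hxN : x ∈ G.N := Finset.mem_of_mem_erase hx
    have hxj : x ≠ j := (Finset.mem_erase.mp hx).1
    obtain ⟨k, hk, huniq⟩ := hG.2.2.1 x hxN
    exact ⟨k, Finset.mem_erase.mpr ⟨hxj, hk⟩, fun q hq => huniq q (Finset.mem_of_mem_erase hq)⟩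
  · intro k
    refine ⟨(hG.2.2.2 k).1, ?_⟩
    show G.d k ≤ ((G.B k).erase j).card
    by_cases hkp : k = p
    · subst hkp
      rw [Finset.card_erase_of_mem hj]
      omega
    · rw [Finset.erase_eq_of_notMem (fun h => hkp (comp_unique hG h hj))]
      exact (hG.2.2.2 k).2

lemma drop_IsDiverse (hDiv : IsDiverseGame G) (j : ℕ) : IsDiverseGame (dropPlayer G j) := by
  intro S hS hv
  have hjS : j ∉ S := fun h => (Finset.mem_erase.mp (hS h)).1 rfl
  exact (diverse_drop_iff hjS).mpr (hDiv S (hS.trans (Finset.erase_subset _ _)) hv)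

lemma star_lemma {f : Value} (hE : Efficiency f) (hIB : IBCOPPD f) (hED : ED f)
    (hG : IsGD G) (hDiv : IsDiverseGame G) {p : Fin G.m} {i : ℕ}
    (hi : i ∈ G.B p) (hd : G.d p < (G.B p).card) :
    ((G.B p).card : ℝ) * f G i
      = (∑ j ∈ (G.B p).erase i, f (dropPlayer G j) i)
        + G.v G.N / G.m - G.v (G.N.erase i) / G.m := by
  have hBC : ∀ j ∈ (G.B p).erase i,
      f G i - f (dropPlayer G j) i = f G j - f (dropPlayer G i) j := fun j hj =>
    (hIB G hG hDiv p i hi j (Finset.mem_of_mem_erase hj)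
      (fun he => (Finset.mem_erase.mp hj).1 he.symm) hd).1
  have hsum := Finset.sum_congr rfl hBC
  rw [Finset.sum_sub_distrib, Finset.sum_sub_distrib, Finset.sum_const,
    Finset.card_erase_of_mem hi, nsmul_eq_mul] at hsum
  have h1 : ∑ j ∈ (G.B p).erase i, f G j = G.v G.N / G.m - f G i := by
    have hcs := f_compSum hE hED hG p
    rw [← Finset.add_sum_erase _ _ hi] at hcs
    linarith
  have h2 : ∑ j ∈ (G.B p).erase i, f (dropPlayer G i) j = G.v (G.N.erase i) / G.m :=
    f_compSum hE hED (drop_IsGD hG hi hd) p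
  have hb : 1 ≤ (G.B p).card := Finset.card_pos.mpr ⟨i, hi⟩
  have hcast : (((G.B p).card - 1 : ℕ) : ℝ) = ((G.B p).card : ℝ) - 1 := by
    rw [Nat.cast_sub hb]
    norm_num
  rw [hcast, h1, h2] at hsum
  linarith [hsum]

lemma addPlayer_IsGD (hG : IsGD G) (p : Fin G.m) {l : ℕ} (hl : l ∉ G.N) :
    IsGD (addPlayer G p l) := by
  have hlB : ∀ k, l ∉ G.B k := fun k h => hl (hG.2.1 k h)
  refine ⟨?_, ?_, ?_, ?_⟩
  · show G.v (Finset.erase ∅ l) = 0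
    rw [Finset.erase_empty]
    exact hG.1
  · intro k
    dsimp only [addPlayer]
    split_ifs with h
    · exact Finset.insert_subset_insert _ (hG.2.1 p)
    · exact (hG.2.1 k).trans (Finset.subset_insert _ _)
  · intro x hx
    rcases Finset.mem_insert.mp hx with hxl | hxN
    · subst hxl
      refine ⟨p, ?_, ?_⟩
      · show x ∈ (if p = p then insert x (G.B p) else G.B p)
        rw [if_pos rfl]
        exact Finset.mem_insert_self _ _
      · intro q hq
        by_contra hqp
        have hq' := hq
        dsimp only [addPlayer] at hq'
        split_ifs at hq' with h'
        · exact absurd h' hqp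
        exact hlB q hq'
    · obtain ⟨k, hk, huniq⟩ := hG.2.2.1 x hxN
      refine ⟨k, ?_, ?_⟩
      · show x ∈ (if k = p then insert l (G.B p) else G.B k)
        split_ifs with h
        · subst h
          exact Finset.mem_insert_of_mem hk
        · exact hk
      · intro q hq
        have hq' := hq
        dsimp only [addPlayer] at hq'
        have hxB : x ∈ G.B q := by
          split_ifs at hq' with h
          · rcases Finset.mem_insert.mp hq' with h1 | h1
            · exact absurd (h1 ▸ hxN) hl
            · exact h ▸ h1
          · exact hq'
        exact huniq q hxB
  · intro k
    refine ⟨(hG.2.2.2 k).1, ?_⟩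
    dsimp only [addPlayer]
    split_ifs with h
    · have h2 := (hG.2.2.2 k).2
      rw [Finset.card_insert_of_notMem (hlB p), ← h]
      omega
    · exact (hG.2.2.2 k).2

lemma addPlayer_IsDiverse (hG : IsGD G) (hDiv : IsDiverseGame G) (p : Fin G.m) {l : ℕ}
    (hl : l ∉ G.N) : IsDiverseGame (addPlayer G p l) := by
  intro S hS hv
  have hv' : G.v (S.erase l) ≠ 0 := hv
  have hsub : S.erase l ⊆ G.N := by
    intro x hx
    rcases Finset.mem_insert.mp (hS (Finset.mem_of_mem_erase hx)) with h | h
    · exact absurd h (Finset.mem_erase.mp hx).1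
    · exact h
  have hdiv := hDiv _ hsub hv'
  intro k
  refine le_trans (hdiv k) (Finset.card_le_card ?_)
  intro x hx
  have h1 := Finset.mem_inter.mp hx
  refine Finset.mem_inter.mpr ⟨Finset.mem_of_mem_erase h1.1, ?_⟩
  dsimp only [addPlayer]
  split_ifs with h
  · exact Finset.mem_insert_of_mem (h ▸ h1.2)
  · exact h1.2

lemma drop_add_eq (p : Fin G.m) {l : ℕ} (hl : l ∉ G.N) (hlB : ∀ k, l ∉ G.B k) :
    dropPlayer (addPlayer G p l) l = gameWith G (fun S => G.v (S.erase l)) := by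
  have hN : (insert l G.N).erase l = G.N := Finset.erase_insert hl
  have hB : (fun k => ((if k = p then insert l (G.B p) else G.B k)).erase l) = G.B := by
    funext k
    by_cases h : k = p
    · subst h
      rw [if_pos rfl, Finset.erase_insert (hlB k)]
    · rw [if_neg h, Finset.erase_eq_of_notMem (hlB k)]
  show DivGame.mk G.m ((insert l G.N).erase l) (fun S => G.v (S.erase l))
      (fun k => ((if k = p then insert l (G.B p) else G.B k)).erase l) G.d
    = DivGame.mk G.m G.N (fun S => G.v (S.erase l)) G.B G.d
  rw [hN, hB]

lemma f_drop_add {f : Value} (hI : INDC f) (hG : IsGD G) (p : Fin G.m) {l x : ℕ}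
    (hl : l ∉ G.N) (hx : x ∈ G.N) :
    f (dropPlayer (addPlayer G p l) l) x = f G x := by
  have hlB : ∀ k, l ∉ G.B k := fun k h => hl (hG.2.1 k h)
  rw [drop_add_eq p hl hlB]
  have h1 : IsGD (gameWith G (fun S => G.v (S.erase l))) := by
    refine ⟨?_, hG.2.1, hG.2.2.1, hG.2.2.2⟩
    show G.v (Finset.erase ∅ l) = 0
    rw [Finset.erase_empty]
    exact hG.1
  have h2 : IsGD (gameWith G G.v) := hG
  have key := hI G (fun S => G.v (S.erase l)) G.v h1 h2
    (fun S hS _ => by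
      show G.v (S.erase l) = G.v S
      rw [Finset.erase_eq_of_notMem (fun h => hl (hS h))]) x hx
  rw [key]
  rfl

lemma null_zero {f : Value} (hIB : IBCOPPD f) (hI : INDC f) (hG : IsGD G)
    (hDiv : IsDiverseGame G) {z : ℕ} (hz : z ∈ G.N)
    (hnull : NullPlayerIn G.v G.N z) : f G z = 0 := by
  obtain ⟨l, hl⟩ := Infinite.exists_notMem_finset G.N
  obtain ⟨p, hp, _⟩ := hG.2.2.1 z hz
  have hG'GD : IsGD (addPlayer G p l) := addPlayer_IsGD hG p hl
  have hG'Div : IsDiverseGame (addPlayer G p l) := addPlayer_IsDiverse hG hDiv p hl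
  have hzB' : z ∈ (addPlayer G p l).B p := by
    show z ∈ (if p = p then insert l (G.B p) else G.B p)
    rw [if_pos rfl]
    exact Finset.mem_insert_of_mem hp
  have hlB' : l ∈ (addPlayer G p l).B p := by
    show l ∈ (if p = p then insert l (G.B p) else G.B p)
    rw [if_pos rfl]
    exact Finset.mem_insert_self _ _
  have hzl : z ≠ l := fun h => hl (h ▸ hz)
  have hcard : (addPlayer G p l).d p < ((addPlayer G p l).B p).card := by
    show G.d p < (if p = p then insert l (G.B p) else G.B p).card
    rw [if_pos rfl, Finset.card_insert_of_notMem (fun h => hl (hG.2.1 p h))]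
    have := (hG.2.2.2 p).2
    omega
  have hclause := (hIB (addPlayer G p l) hG'GD hG'Div p z hzB' l hlB' hzl hcard).2.1
  have hnull' : NullPlayerIn (dropPlayer (addPlayer G p l) l).v
      (dropPlayer (addPlayer G p l) l).N z := by
    intro S hS
    have hS' : S ⊆ ((insert l G.N).erase l).erase z := hS
    rw [Finset.erase_insert hl] at hS'
    have hlS : l ∉ S := fun h => hl (Finset.mem_of_mem_erase (hS' h))
    show G.v ((insert z S).erase l) = G.v (S.erase l)
    rw [Finset.erase_eq_of_notMem
        (show l ∉ insert z S from fun h => by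
          rcases Finset.mem_insert.mp h with h1 | h1
          · exact hzl h1.symm
          · exact hlS h1),
      Finset.erase_eq_of_notMem hlS]
    exact hnull S hS'
  have h0 := hclause hnull'
  rwa [f_drop_add hI hG p hl hz] at h0

end Uniqueness

section Saturated

variable {G : DivGame}

lemma sat_lemma {f : Value} (hE : Efficiency f) (hIB : IBCOPPD f) (hED : ED f)
    (hI : INDC f) (hG : IsGD G) (hDiv : IsDiverseGame G) {p : Fin G.m} {i : ℕ}
    (hi : i ∈ G.B p) (hd : G.d p = (G.B p).card) :
    ((G.B p).card : ℝ) * f G i = G.v G.N / G.m := by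
  obtain ⟨l, hl⟩ := Infinite.exists_notMem_finset G.N
  have hiN : i ∈ G.N := hG.2.1 p hi
  have hil : i ≠ l := fun h => hl (h ▸ hiN)
  have hlBp : l ∉ G.B p := fun h => hl (hG.2.1 p h)
  have hG'GD : IsGD (addPlayer G p l) := addPlayer_IsGD hG p hl
  have hG'Div : IsDiverseGame (addPlayer G p l) := addPlayer_IsDiverse hG hDiv p hl
  have hiB' : i ∈ (addPlayer G p l).B p := by
    show i ∈ (if p = p then insert l (G.B p) else G.B p)
    rw [if_pos rfl]
    exact Finset.mem_insert_of_mem hi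
  have hlB' : l ∈ (addPlayer G p l).B p := by
    show l ∈ (if p = p then insert l (G.B p) else G.B p)
    rw [if_pos rfl]
    exact Finset.mem_insert_self _ _
  have hBp' : (addPlayer G p l).B p = insert l (G.B p) := by
    show (if p = p then insert l (G.B p) else G.B p) = _
    rw [if_pos rfl]
  have hcardB' : ((addPlayer G p l).B p).card = (G.B p).card + 1 := by
    rw [hBp', Finset.card_insert_of_notMem hlBp]
  have hcard : (addPlayer G p l).d p < ((addPlayer G p l).B p).card := by
    show G.d p < ((addPlayer G p l).B p).card
    rw [hcardB']
    omega
  -- every player of the game (G + l) - j, for j ∈ B p, gets zero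
  have hHzero : ∀ j ∈ G.B p, ∀ x ∈ (dropPlayer (addPlayer G p l) j).N,
      f (dropPlayer (addPlayer G p l) j) x = 0 := by
    intro j hj x hx
    have hjN : j ∈ G.N := hG.2.1 p hj
    have hjB' : j ∈ (addPlayer G p l).B p := by
      rw [hBp']
      exact Finset.mem_insert_of_mem hj
    have hvzero : ∀ S ⊆ (insert l G.N).erase j, G.v (S.erase l) = 0 := by
      intro S hS
      by_contra hv
      have hjS : j ∉ S := fun h => (Finset.mem_erase.mp (hS h)).1 rfl
      have hsub : S.erase l ⊆ G.N := by
        intro y hy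
        have hyl : y ≠ l := (Finset.mem_erase.mp hy).1
        rcases Finset.mem_insert.mp (Finset.mem_of_mem_erase
          (hS (Finset.mem_of_mem_erase hy))) with h | h
        · exact absurd h hyl
        · exact h
      have hdiv := hDiv _ hsub hv
      have hc := hdiv p
      have hsub2 : S.erase l ∩ G.B p ⊆ G.B p := Finset.inter_subset_right
      have heq : S.erase l ∩ G.B p = G.B p :=
        Finset.eq_of_subset_of_card_le hsub2 (by omega)
      have hjmem : j ∈ S.erase l ∩ G.B p := heq.symm ▸ hj
      exact hjS (Finset.mem_of_mem_erase (Finset.mem_inter.mp hjmem).1)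
    have hHGD : IsGD (dropPlayer (addPlayer G p l) j) := drop_IsGD hG'GD hjB' hcard
    have hHDiv : IsDiverseGame (dropPlayer (addPlayer G p l) j) :=
      fun S hS hv => absurd (hvzero S hS) hv
    refine null_zero hIB hI hHGD hHDiv hx ?_
    intro S hS
    show G.v ((insert x S).erase l) = G.v (S.erase l)
    rw [hvzero _ (Finset.insert_subset hx (hS.trans (Finset.erase_subset _ _))),
      hvzero _ (hS.trans (Finset.erase_subset _ _))]
  have hstar := star_lemma hE hIB hED hG'GD hG'Div hiB' hcard
  have hBC := (hIB (addPlayer G p l) hG'GD hG'Div p i hiB' l hlB' hil hcard).1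
  have hfl : f (addPlayer G p l) l = 0 := by
    refine null_zero hIB hI hG'GD hG'Div (Finset.mem_insert_self _ _) ?_
    intro S _
    show G.v ((insert l S).erase l) = G.v (S.erase l)
    rw [Finset.erase_insert_eq_erase]
  have hdropl : f (dropPlayer (addPlayer G p l) l) i = f G i := f_drop_add hI hG p hl hiN
  have hHl : f (dropPlayer (addPlayer G p l) i) l = 0 :=
    hHzero i hi l (Finset.mem_erase.mpr ⟨hil.symm, Finset.mem_insert_self _ _⟩)
  have hfeq : f (addPlayer G p l) i = f G i := by
    rw [hdropl, hfl, hHl] at hBC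
    linarith
  have hBpe : ((addPlayer G p l).B p).erase i = insert l ((G.B p).erase i) := by
    rw [hBp', Finset.erase_insert_of_ne hil.symm]
  have hsum0 : ∑ j ∈ ((addPlayer G p l).B p).erase i,
      f (dropPlayer (addPlayer G p l) j) i = f G i := by
    rw [hBpe, Finset.sum_insert (fun h => hlBp (Finset.mem_of_mem_erase h)), hdropl]
    have hz : ∀ j ∈ (G.B p).erase i, f (dropPlayer (addPlayer G p l) j) i = 0 := fun j hj =>
      hHzero j (Finset.mem_of_mem_erase hj) i
        (Finset.mem_erase.mpr ⟨fun he => (Finset.mem_erase.mp hj).1 he.symm,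
          Finset.mem_insert_of_mem hiN⟩)
    rw [Finset.sum_eq_zero hz]
    ring
  have hv1 : (addPlayer G p l).v (addPlayer G p l).N = G.v G.N := by
    show G.v ((insert l G.N).erase l) = _
    rw [Finset.erase_insert hl]
  have hv2 : (addPlayer G p l).v ((addPlayer G p l).N.erase i) = 0 := by
    show G.v (((insert l G.N).erase i).erase l) = 0
    rw [Finset.erase_right_comm, Finset.erase_insert hl]
    by_contra hv
    have hdiv := hDiv _ (Finset.erase_subset _ _) hv
    have hc := hdiv p
    have hinter : G.N.erase i ∩ G.B p = (G.B p).erase i := by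
      ext x
      simp only [Finset.mem_inter, Finset.mem_erase]
      constructor
      · rintro ⟨⟨hxi, _⟩, hxB⟩
        exact ⟨hxi, hxB⟩
      · rintro ⟨hxi, hxB⟩
        exact ⟨⟨hxi, hG.2.1 p hxB⟩, hxB⟩
    have hb : 1 ≤ (G.B p).card := Finset.card_pos.mpr ⟨i, hi⟩
    rw [hinter, Finset.card_erase_of_mem hi] at hc
    omega
  rw [hcardB', hsum0, hfeq, hv1, hv2] at hstar
  have hmeq : (addPlayer G p l).m = G.m := rfl
  rw [hmeq] at hstar
  have hc1 : (((G.B p).card + 1 : ℕ) : ℝ) = ((G.B p).card : ℝ) + 1 := by push_cast; ring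
  rw [hc1] at hstar
  have : (0:ℝ) / G.m = 0 := by ring
  rw [this] at hstar
  linarith

end Saturated

lemma agree_lemma {f g : Value}
    (hfE : Efficiency f) (hfIB : IBCOPPD f) (hfED : ED f) (hfI : INDC f)
    (hgE : Efficiency g) (hgIB : IBCOPPD g) (hgED : ED g) (hgI : INDC g) :
    ∀ n : ℕ, ∀ G : DivGame, G.N.card ≤ n → IsGD G → IsDiverseGame G →
      ∀ i ∈ G.N, f G i = g G i := by
  intro n
  induction n with
  | zero =>
    intro G hc hG hDiv i hi
    exact absurd (Finset.card_pos.mpr ⟨i, hi⟩) (by omega)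
  | succ n ih =>
    intro G hc hG hDiv i hi
    obtain ⟨p, hp, _⟩ := hG.2.2.1 i hi
    have hb : 1 ≤ (G.B p).card := Finset.card_pos.mpr ⟨i, hp⟩
    have hbne : ((G.B p).card : ℝ) ≠ 0 := Nat.cast_ne_zero.mpr (by omega)
    rcases eq_or_lt_of_le (hG.2.2.2 p).2 with hd | hd
    · have h1 := sat_lemma hfE hfIB hfED hfI hG hDiv hp hd
      have h2 := sat_lemma hgE hgIB hgED hgI hG hDiv hp hd
      exact mul_left_cancel₀ hbne (h1.trans h2.symm)
    · have h1 := star_lemma hfE hfIB hfED hG hDiv hp hd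
      have h2 := star_lemma hgE hgIB hgED hG hDiv hp hd
      have hNc : 1 ≤ G.N.card := Finset.card_pos.mpr ⟨i, hi⟩
      have hsum : ∑ j ∈ (G.B p).erase i, f (dropPlayer G j) i
          = ∑ j ∈ (G.B p).erase i, g (dropPlayer G j) i := by
        refine Finset.sum_congr rfl fun j hj => ?_
        have hjB : j ∈ G.B p := Finset.mem_of_mem_erase hj
        have hjN : j ∈ G.N := hG.2.1 p hjB
        have hji : j ≠ i := (Finset.mem_erase.mp hj).1
        refine ih (dropPlayer G j) ?_ (drop_IsGD hG hjB hd) (drop_IsDiverse hDiv j) i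
          (Finset.mem_erase.mpr ⟨hji.symm, hi⟩)
        show (G.N.erase j).card ≤ n
        rw [Finset.card_erase_of_mem hjN]
        omega
      have hkey : ((G.B p).card : ℝ) * f G i = ((G.B p).card : ℝ) * g G i := by
        rw [h1, h2, hsum]
      exact mul_left_cancel₀ hbne hkey

/-- the Diversity Owen value is the unique value on GD satisfying
E, IBCOPPD, ED and INDC. -/
theorem diversityOwen_characterization_two :
    (Efficiency DOw ∧ IBCOPPD DOw ∧ ED DOw ∧ INDC DOw) ∧
    (∀ f : Value, Efficiency f → IBCOPPD f → ED f → INDC f →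
      ∀ G, IsGD G → ∀ i ∈ G.N, f G i = DOw G i) := by
  have hE := DOw_E
  have hIB := DOw_IB
  have hED := DOw_ED
  have hI := DOw_INDC
  refine ⟨⟨hE, hIB, hED, hI⟩, ?_⟩
  intro f hfE hfIB hfED hfI G hG i hi
  have hGD1 : IsGD (gameWith G (restrictedGame G)) := by
    refine ⟨?_, hG.2.1, hG.2.2.1, hG.2.2.2⟩
    show (if DiverseCoal G ∅ then G.v ∅ else 0) = 0
    split_ifs with h
    · exact hG.1
    · rfl
  have hDiv1 : IsDiverseGame (gameWith G (restrictedGame G)) := by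
    intro S _ hv
    show DiverseCoal G S
    by_contra h
    exact hv (if_neg h)
  have hvw : ∀ S ⊆ G.N, DiverseCoal G S → G.v S = restrictedGame G S :=
    fun S _ hdiv => (if_pos hdiv).symm
  have step1 : f G i = f (gameWith G (restrictedGame G)) i := by
    have := hfI G G.v (restrictedGame G) hG hGD1 hvw i hi
    rw [← this]
    rfl
  have step2 : DOw G i = DOw (gameWith G (restrictedGame G)) i := by
    have := hI G G.v (restrictedGame G) hG hGD1 hvw i hi
    rw [← this]
    rfl
  rw [step1, step2]
  exact agree_lemma hfE hfIB hfED hfI hE hIB hED hI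
    (gameWith G (restrictedGame G)).N.card (gameWith G (restrictedGame G))
    le_rfl hGD1 hDiv1 i hi
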